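/- arXiv:1701.08586 — 2 statements merged into one kernel-verified Lean document; each statement's English description precedes it below -/
import Mathlib

section
/- Let φ : Ω → ℝ^d be an injective C¹ map on an open set Ω ⊂ ℝ^d whose derivative is everywhere invertible, let E ⊂ Ω be a set on which φ' is a conformal linear map (i.e. |(φ'(x))⁻¹|⁻¹ = |φ'(x)| for x ∈ E), and suppose the bounded distortion property |φ'(x)| ≤ K₀·|(φ'(y))⁻¹|⁻¹ holds for all x, y ∈ Ω with a constant K₀ ≥ 1. Then for every x ∈ E and every 0 < r < dist(E, ∂Ω), the open ball B(φ(x), K₀⁻¹·|φ'(x)|·r) is contained in φ(B(x, r)). -/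
open Metric Set Topology Filter

/-- Distance between two sets. -/
noncomputable def setDist {d : ℕ} (s t : Set (EuclideanSpace ℝ (Fin d))) : ℝ :=
  sInf ((fun x => Metric.infDist x t) '' s)

/-- images of balls under a conformal-on-`E` map with bounded
distortion contain comparably sized balls. -/
theorem statement1 {d : ℕ}
    (Ω E : Set (EuclideanSpace ℝ (Fin d))) (hΩ : IsOpen Ω) (hE : E ⊆ Ω)
    (φ : EuclideanSpace ℝ (Fin d) → EuclideanSpace ℝ (Fin d))
    (hinj : Set.InjOn φ Ω)
    (φD : EuclideanSpace ℝ (Fin d) →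
      (EuclideanSpace ℝ (Fin d) ≃L[ℝ] EuclideanSpace ℝ (Fin d)))
    (hder : ∀ x ∈ Ω, HasFDerivAt φ
      (φD x : EuclideanSpace ℝ (Fin d) →L[ℝ] EuclideanSpace ℝ (Fin d)) x)
    (hC1 : ContDiffOn ℝ 1 φ Ω)
    (hconf : ∀ x ∈ E,
      (‖((φD x).symm : EuclideanSpace ℝ (Fin d) →L[ℝ] EuclideanSpace ℝ (Fin d))‖)⁻¹ =
      ‖(φD x : EuclideanSpace ℝ (Fin d) →L[ℝ] EuclideanSpace ℝ (Fin d))‖)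
    (K₀ : ℝ) (hK₀ : 1 ≤ K₀)
    (hbd : ∀ x ∈ Ω, ∀ y ∈ Ω,
      ‖(φD x : EuclideanSpace ℝ (Fin d) →L[ℝ] EuclideanSpace ℝ (Fin d))‖ ≤
        K₀ * (‖((φD y).symm : EuclideanSpace ℝ (Fin d) →L[ℝ] EuclideanSpace ℝ (Fin d))‖)⁻¹)
    (x : EuclideanSpace ℝ (Fin d)) (hx : x ∈ E)
    (r : ℝ) (hr0 : 0 < r) (hr : r < setDist E (frontier Ω)) :
    ball (φ x) (K₀⁻¹ *
      ‖(φD x : EuclideanSpace ℝ (Fin d) →L[ℝ] EuclideanSpace ℝ (Fin d))‖ * r) ⊆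
      φ '' ball x r := by
  intro z hz
  have hxΩ : x ∈ Ω := hE hx
  set N := ‖(φD x : EuclideanSpace ℝ (Fin d) →L[ℝ] EuclideanSpace ℝ (Fin d))‖ with hNdef
  have hzd : dist z (φ x) < K₀⁻¹ * N * r := mem_ball.1 hz
  have hK₀0 : (0:ℝ) < K₀ := lt_of_lt_of_le one_pos hK₀
  have hN : 0 < N := by
    by_contra h
    push_neg at h
    have h1 : K₀⁻¹ * N * r ≤ 0 := by
      have : K₀⁻¹ * N ≤ 0 := mul_nonpos_of_nonneg_of_nonpos (by positivity) h
      exact mul_nonpos_of_nonpos_of_nonneg this hr0.le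
    have := dist_nonneg (x := z) (y := φ x)
    linarith
  -- the closed ball of radius r is inside Ω
  have hsetle : setDist E (frontier Ω) ≤ infDist x (frontier Ω) := by
    rw [setDist]
    exact csInf_le ⟨0, by rintro v ⟨y, _, rfl⟩; exact infDist_nonneg⟩ (mem_image_of_mem _ hx)
  have hrx : r < infDist x (frontier Ω) := lt_of_lt_of_le hr hsetle
  have hΩne : Ω ≠ univ := by
    intro h
    rw [h, frontier_univ, infDist_empty] at hrx
    linarith
  have hball : closedBall x r ⊆ Ω := by
    intro w hw
    by_contra hwΩ
    obtain ⟨y, hyf, hyd⟩ := exists_mem_frontier_infDist_compl_eq_dist hxΩ hΩne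
    have h1 : infDist x Ωᶜ ≤ dist x w := infDist_le_dist_of_mem hwΩ
    have h2 : infDist x (frontier Ω) ≤ infDist x Ωᶜ := hyd ▸ infDist_le_dist_of_mem hyf
    have h3 : dist w x ≤ r := mem_closedBall.1 hw
    rw [dist_comm] at h3
    linarith
  -- trivial case
  by_cases hzx : z = φ x
  · exact ⟨x, mem_ball_self hr0, hzx.symm⟩
  have hL : 0 < ‖z - φ x‖ := by
    rw [norm_pos_iff, sub_ne_zero]; exact hzx
  set L := ‖z - φ x‖ with hLdef
  have hLρ : L < K₀⁻¹ * N * r := by rwa [dist_eq_norm] at hzd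
  set M : ℝ := K₀ / N * L with hM
  have hM0 : 0 < M := by positivity
  have hMr : M < r := by
    have h1 : K₀ * L < K₀ * (K₀⁻¹ * N * r) := mul_lt_mul_of_pos_left hLρ hK₀0
    rw [← mul_assoc, ← mul_assoc, mul_inv_cancel₀ (ne_of_gt hK₀0), one_mul] at h1
    rw [hM, div_mul_eq_mul_div, div_lt_iff₀ hN]
    linarith
  set M' : ℝ := (M + r) / 2 with hM'
  have hMM' : M < M' := by rw [hM']; linarith
  have hM'r : M' < r := by rw [hM']; linarith
  have hM'0 : 0 < M' := lt_trans hM0 hMM'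
  -- pointwise bound on the inverse derivative
  have hsymm : ∀ y ∈ Ω,
      ‖((φD y).symm : EuclideanSpace ℝ (Fin d) →L[ℝ] EuclideanSpace ℝ (Fin d))‖ ≤ K₀ / N := by
    intro y hy
    have h := hbd x hxΩ y hy
    rcases eq_or_lt_of_le (norm_nonneg
      ((φD y).symm : EuclideanSpace ℝ (Fin d) →L[ℝ] EuclideanSpace ℝ (Fin d))) with h0 | h0
    · rw [← h0]; positivity
    · have hs0 : ‖((φD y).symm : EuclideanSpace ℝ (Fin d) →L[ℝ] EuclideanSpace ℝ (Fin d))‖ ≠ 0 :=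
        ne_of_gt h0
      rw [le_div_iff₀ hN]
      calc ‖((φD y).symm : EuclideanSpace ℝ (Fin d) →L[ℝ] EuclideanSpace ℝ (Fin d))‖ * N
          ≤ ‖((φD y).symm : EuclideanSpace ℝ (Fin d) →L[ℝ] EuclideanSpace ℝ (Fin d))‖ *
            (K₀ * ‖((φD y).symm : EuclideanSpace ℝ (Fin d) →L[ℝ] EuclideanSpace ℝ (Fin d))‖⁻¹) :=
            mul_le_mul_of_nonneg_left h h0.le
        _ = K₀ := by rw [mul_comm K₀, ← mul_assoc, mul_inv_cancel₀ hs0, one_mul]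
  -- the segment from φ x to z
  set γ : ℝ → EuclideanSpace ℝ (Fin d) := fun t => φ x + t • (z - φ x) with hγ
  have hγc : Continuous γ := by
    apply Continuous.add continuous_const
    exact continuous_id.smul continuous_const
  have hγ0 : γ 0 = φ x := by simp [hγ]
  have hγ1 : γ 1 = z := by simp [hγ]
  have hγdist : ∀ t t' : ℝ, dist (γ t') (γ t) = |t' - t| * L := by
    intro t t'
    rw [dist_eq_norm]
    have : γ t' - γ t = (t' - t) • (z - φ x) := by
      simp only [hγ]; module
    rw [this, norm_smul, Real.norm_eq_abs, hLdef]
  -- the continuation set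
  set A : Set ℝ := {t ∈ Icc (0:ℝ) 1 | ∃ y, ‖y - x‖ ≤ M' * t ∧ φ y = γ t} with hA
  have h0A : (0:ℝ) ∈ A := ⟨⟨le_rfl, zero_le_one⟩, x, by simp, by rw [hγ0]⟩
  have hmemΩ : ∀ y : EuclideanSpace ℝ (Fin d), ‖y - x‖ ≤ M' → y ∈ Ω := by
    intro y hy
    apply hball
    rw [mem_closedBall, dist_eq_norm]
    exact hy.trans hM'r.le
  have hAclosed : IsClosed A := by
    apply IsSeqClosed.isClosed
    intro u t hu hut
    have htIcc : t ∈ Icc (0:ℝ) 1 :=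
      isClosed_Icc.mem_of_tendsto hut (Filter.Eventually.of_forall fun n => (hu n).1)
    choose y hy1 hy2 using fun n => (hu n).2
    have hyb : ∀ n, y n ∈ closedBall x M' := by
      intro n
      rw [mem_closedBall, dist_eq_norm]
      calc ‖y n - x‖ ≤ M' * u n := hy1 n
        _ ≤ M' * 1 := by
            have := (hu n).1.2
            nlinarith
        _ = M' := mul_one _
    obtain ⟨w, hw, ψ, hψmono, hψtend⟩ := (isCompact_closedBall x M').tendsto_subseq hyb
    have hutψ : Filter.Tendsto (fun n => u (ψ n)) Filter.atTop (𝓝 t) :=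
      hut.comp hψmono.tendsto_atTop
    have hwx : ‖w - x‖ ≤ M' * t := by
      have h1 : Filter.Tendsto (fun n => ‖y (ψ n) - x‖) Filter.atTop (𝓝 ‖w - x‖) :=
        ((continuous_id.sub continuous_const).norm.continuousAt).tendsto.comp hψtend
      have h2 : Filter.Tendsto (fun n => M' * u (ψ n)) Filter.atTop (𝓝 (M' * t)) :=
        hutψ.const_mul M'
      exact le_of_tendsto_of_tendsto' h1 h2 fun n => hy1 (ψ n)
    have hwΩ : w ∈ Ω := hmemΩ w (by rw [mem_closedBall, dist_eq_norm] at hw; exact hw)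
    have hφw : φ w = γ t := by
      have h1 : Filter.Tendsto (fun n => φ (y (ψ n))) Filter.atTop (𝓝 (φ w)) :=
        ((hder w hwΩ).continuousAt).tendsto.comp hψtend
      have h2 : Filter.Tendsto (fun n => φ (y (ψ n))) Filter.atTop (𝓝 (γ t)) := by
        simp only [fun n => hy2 (ψ n)]
        exact (hγc.continuousAt).tendsto.comp hutψ
      exact tendsto_nhds_unique h1 h2
    exact ⟨htIcc, w, hwx, hφw⟩
  have hAbdd : BddAbove A := ⟨1, fun t ht => ht.1.2⟩
  set T := sSup A with hTdef
  have hTA : T ∈ A := hAclosed.csSup_mem ⟨0, h0A⟩ hAbdd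
  obtain ⟨⟨hT0, hT1⟩, y, hy1, hy2⟩ := hTA
  have hyM' : ‖y - x‖ ≤ M' := by
    calc ‖y - x‖ ≤ M' * T := hy1
      _ ≤ M' * 1 := by nlinarith
      _ = M' := mul_one _
  have hyΩ : y ∈ Ω := hmemΩ y hyM'
  -- T must equal 1, else we can continue the lift
  have hT1' : T = 1 := by
    by_contra hne
    have hTlt : T < 1 := lt_of_le_of_ne hT1 hne
    -- strict differentiability at y
    have hsd : HasStrictFDerivAt φ
        ((φD y : EuclideanSpace ℝ (Fin d) →L[ℝ] EuclideanSpace ℝ (Fin d))) y := by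
      have h1 := (hC1.contDiffAt (hΩ.mem_nhds hyΩ)).hasStrictFDerivAt one_ne_zero
      rwa [(hder y hyΩ).fderiv] at h1
    set g := hsd.localInverse φ (φD y) y with hg
    have hK : ‖((φD y).symm : EuclideanSpace ℝ (Fin d) →L[ℝ] EuclideanSpace ℝ (Fin d))‖₊ <
        Real.toNNReal (M' / L) := by
      rw [← NNReal.coe_lt_coe, coe_nnnorm, Real.coe_toNNReal _ (by positivity)]
      calc ‖((φD y).symm : EuclideanSpace ℝ (Fin d) →L[ℝ] EuclideanSpace ℝ (Fin d))‖
          ≤ K₀ / N := hsymm y hyΩ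
        _ = M / L := by rw [hM]; field_simp
        _ < M' / L := by gcongr
    obtain ⟨s, hs, hlip⟩ := hsd.to_localInverse.exists_lipschitzOnWith_of_nnnorm_lt
      (Real.toNNReal (M' / L)) hK
    have hrinv := hsd.eventually_right_inverse
    have hsev : ∀ᶠ w in 𝓝 (φ y), w ∈ s := by
      filter_upwards [hs] with w hw
      exact hw
    rw [hy2] at hsev hrinv
    have hev : ∀ᶠ t' in 𝓝 T, γ t' ∈ s ∧ φ (g (γ t')) = γ t' :=
      (hγc.tendsto T).eventually (hsev.and hrinv)
    obtain ⟨δ, hδ0, hδ⟩ := Metric.eventually_nhds_iff.1 hev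
    set t' : ℝ := min 1 (T + δ / 2) with ht'
    have hTt' : T < t' := lt_min hTlt (by linarith)
    have ht'1 : t' ≤ 1 := min_le_left _ _
    have hdtT : dist t' T < δ := by
      rw [Real.dist_eq, abs_of_pos (by linarith)]
      have : t' ≤ T + δ / 2 := min_le_right _ _
      linarith
    obtain ⟨hts, htr⟩ := hδ hdtT
    have hTs : γ T ∈ s ∧ φ (g (γ T)) = γ T := hδ (by simpa [dist_self] using hδ0)
    have hgT : g (γ T) = y := by
      rw [← hy2]
      exact hsd.localInverse_apply_image
    have hdist : dist (g (γ t')) (g (γ T)) ≤ M' / L * dist (γ t') (γ T) := by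
      have := hlip.dist_le_mul _ hts _ hTs.1
      rwa [Real.coe_toNNReal _ (by positivity)] at this
    have hnorm : ‖g (γ t') - x‖ ≤ M' * t' := by
      have h1 : ‖g (γ t') - x‖ ≤ ‖g (γ t') - y‖ + ‖y - x‖ := by
        have := dist_triangle (g (γ t')) y x
        simpa [dist_eq_norm] using this
      have h2 : ‖g (γ t') - y‖ ≤ M' * (t' - T) := by
        rw [← hgT, ← dist_eq_norm]
        calc dist (g (γ t')) (g (γ T)) ≤ M' / L * dist (γ t') (γ T) := hdist
          _ = M' / L * (|t' - T| * L) := by rw [hγdist]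
          _ = M' * (t' - T) := by
              rw [abs_of_pos (by linarith)]
              field_simp
      calc ‖g (γ t') - x‖ ≤ ‖g (γ t') - y‖ + ‖y - x‖ := h1
        _ ≤ M' * (t' - T) + M' * T := add_le_add h2 hy1
        _ = M' * t' := by ring
    have ht'A : t' ∈ A := ⟨⟨by linarith, ht'1⟩, g (γ t'), hnorm, htr⟩
    have : t' ≤ T := le_csSup hAbdd ht'A
    linarith
  -- conclude
  refine ⟨y, ?_, ?_⟩
  · rw [mem_ball, dist_eq_norm]
    calc ‖y - x‖ ≤ M' := hyM'
      _ < r := hM'r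
  · rw [hy2, hT1', hγ1]
end

section
/- Let a ∈ ℝ^d, V ∈ G(d,l), 0 < δ < 1, 1/(δ+1) < ϱ < 1, and suppose x, y ∈ ℝ^d with y ∉ X(x,W,δ) for some W ∈ G(d,l) and y ≠ x. Then there exists 0 < η < 1, depending only on δ and ϱ, such that B(y, η·r') ⊂ B(x, r') \ X(x, W, ϱδ), where r' = 2|x−y|. -/
open Metric Set

/-
The map `v ↦ ‖Q_W v‖` is 1-Lipschitz, so moving from `y` to `z` lowers
`‖Q_W(· − x)‖` by at most `|z − y|` while raising `|· − x|` by at most `|z − y|`. Starting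
from `√δ |y − x| ≤ |Q_W(y − x)|`, the point `z` therefore stays outside the `ϱδ`-cone as long
as `(1 + √(ϱδ)) |z − y| ≤ (√δ − √(ϱδ)) |y − x|`, which `η = (√δ − √(ϱδ))/4` guarantees.
-/

/-- Projection onto the orthogonal complement of `V`. -/
noncomputable def projQ {d : ℕ} (V : Submodule ℝ (EuclideanSpace ℝ (Fin d))) :
    EuclideanSpace ℝ (Fin d) →L[ℝ] EuclideanSpace ℝ (Fin d) :=
  Vᗮ.subtypeL.comp (Submodule.orthogonalProjectionOnto Vᗮ)

/-- The open cone at `a` around the plane `V` with aperture parameter `δ`. -/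
noncomputable def coneX {d : ℕ} (a : EuclideanSpace ℝ (Fin d))
    (V : Submodule ℝ (EuclideanSpace ℝ (Fin d))) (δ : ℝ) : Set (EuclideanSpace ℝ (Fin d)) :=
  {x | ‖projQ V (x - a)‖ < Real.sqrt δ * ‖x - a‖}

theorem norm_projQ_le {d : ℕ} (V : Submodule ℝ (EuclideanSpace ℝ (Fin d)))
    (v : EuclideanSpace ℝ (Fin d)) : ‖projQ V v‖ ≤ ‖v‖ :=
  Vᗮ.norm_starProjection_apply_le v

theorem notMem_coneX_of_norm_sub_le {d : ℕ} {x y z : EuclideanSpace ℝ (Fin d)}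
    {V : Submodule ℝ (EuclideanSpace ℝ (Fin d))} {δ δ' : ℝ} (hy : y ∉ coneX x V δ)
    (hz : (1 + √δ') * ‖z - y‖ ≤ (√δ - √δ') * ‖y - x‖) : z ∉ coneX x V δ' := by
  simp only [coneX, mem_ofPred_eq, not_lt] at hy ⊢
  have hproj : ‖projQ V (y - x)‖ - ‖z - y‖ ≤ ‖projQ V (z - x)‖ := by
    have hsplit : projQ V (y - x) = projQ V (z - x) - projQ V (z - y) := by
      rw [← map_sub, sub_sub_sub_cancel_left]
    have := norm_sub_le (projQ V (z - x)) (projQ V (z - y))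
    rw [← hsplit] at this
    linarith [norm_projQ_le V (z - y)]
  have htriangle : ‖z - x‖ ≤ ‖z - y‖ + ‖y - x‖ := norm_sub_le_norm_sub_add_norm_sub z y x
  have := mul_le_mul_of_nonneg_left htriangle (Real.sqrt_nonneg δ')
  linarith

theorem statement8_general (d l : ℕ)
    (δ ϱ : ℝ) (hδ0 : 0 < δ) (hδ1 : δ < 1) (hϱ1 : ϱ < 1) :
    ∃ η : ℝ, 0 < η ∧ η < 1 ∧
      ∀ (x y : EuclideanSpace ℝ (Fin d))
        (W : Submodule ℝ (EuclideanSpace ℝ (Fin d))),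
        Module.finrank ℝ W = l → y ∉ coneX x W δ → y ≠ x →
        ball y (η * (2 * ‖x - y‖)) ⊆
          ball x (2 * ‖x - y‖) \ coneX x W (ϱ * δ) := by
  have hts : √(ϱ * δ) < √δ := (Real.sqrt_lt_sqrt_iff_of_pos hδ0).2 (by nlinarith)
  have hs1 : √δ < 1 := by simpa using Real.sqrt_lt_sqrt hδ0.le hδ1
  have ht0 : 0 ≤ √(ϱ * δ) := Real.sqrt_nonneg _
  refine ⟨(√δ - √(ϱ * δ)) / 4, by linarith, by linarith, ?_⟩
  intro x y W _ hy _ z hz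
  have hzy : ‖z - y‖ < (√δ - √(ϱ * δ)) / 4 * (2 * ‖x - y‖) := by
    rwa [mem_ball, dist_eq_norm] at hz
  refine ⟨ball_subset_ball' ?_ hz, notMem_coneX_of_norm_sub_le hy ?_⟩
  · rw [dist_comm, dist_eq_norm]
    nlinarith [norm_nonneg (x - y)]
  · rw [norm_sub_rev y x]
    nlinarith [norm_nonneg (z - y)]

/-- a point outside the `δ`-cone has a whole ball around it, of
radius a definite fraction of `|x-y|` depending only on `δ` and `ϱ`, outside
the `ϱδ`-cone and inside `B(x, 2|x−y|)`. -/
theorem statement8 (d l : ℕ) (h0 : 0 < l) (hld : l < d)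
    (δ ϱ : ℝ) (hδ0 : 0 < δ) (hδ1 : δ < 1) (hϱ : 1 / (δ + 1) < ϱ) (hϱ1 : ϱ < 1) :
    ∃ η : ℝ, 0 < η ∧ η < 1 ∧
      ∀ (x y : EuclideanSpace ℝ (Fin d))
        (W : Submodule ℝ (EuclideanSpace ℝ (Fin d))),
        Module.finrank ℝ W = l → y ∉ coneX x W δ → y ≠ x →
        ball y (η * (2 * ‖x - y‖)) ⊆
          ball x (2 * ‖x - y‖) \ coneX x W (ϱ * δ) :=
  statement8_general d l δ ϱ hδ0 hδ1 hϱ1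
end
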